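/- arXiv:2508.15738 — 2 statements merged into one kernel-verified Lean document; each statement's English description precedes it below -/
import Mathlib

section
/- Let G be a group and G' ≤ G a finite-index subgroup. Then G' has unbranched blocks if and only if G has unbranched blocks. -/
universe u v

/-- A subgroup `B ≤ G` is virtually (nonabelian free) × ℤ: it has a finite-index
subgroup isomorphic to `F × ℤ` with `F` a nonabelian free group. -/
def IsVirtFNZ {G : Type u} [Group G] (B : Subgroup G) : Prop :=
  ∃ H : Subgroup G, H ≤ B ∧ H.relIndex B ≠ 0 ∧
    ∃ (ι : Type u) (x y : ι), x ≠ y ∧ Nonempty (↥H ≃* FreeGroup ι × Multiplicative ℤ)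

/-- A *block* of `G`: a subgroup virtually of the form (nonabelian free) × ℤ that is
maximal up to commensurability among such subgroups. -/
def IsGroupBlock {G : Type u} [Group G] (B : Subgroup G) : Prop :=
  IsVirtFNZ B ∧ ∀ B' : Subgroup G, IsVirtFNZ B' → B'.relIndex B ≠ 0 → B.relIndex B' ≠ 0

/-- A group is virtually cyclic (possibly finite) if it has a finite-index cyclic subgroup. -/
def IsVirtuallyCyclic (K : Type*) [Group K] : Prop :=
  ∃ H : Subgroup K, H.FiniteIndex ∧ IsCyclic H

/-- `G` has unbranched blocks: any three blocks that pairwise intersect in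
infinite-index subgroups have virtually cyclic triple intersection. -/
def HasUnbranchedBlocks (G : Type u) [Group G] : Prop :=
  ∀ B₁ B₂ B₃ : Subgroup G, IsGroupBlock B₁ → IsGroupBlock B₂ → IsGroupBlock B₃ →
    B₂.relIndex B₁ = 0 → B₃.relIndex B₁ = 0 → B₁.relIndex B₂ = 0 →
    B₃.relIndex B₂ = 0 → B₁.relIndex B₃ = 0 → B₂.relIndex B₃ = 0 →
    IsVirtuallyCyclic ↥(B₁ ⊓ B₂ ⊓ B₃)

/-!
All notions involved depend on a subgroup only up to commensurability, and a finite-index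
`G' ≤ G` induces a bijection between commensurability classes of subgroups of `G'` and of
`G` (`B ↦ B`, `B ↦ B ∩ G'`). The one non-formal input is that being virtually
(nonabelian free) × ℤ passes to finite-index subgroups: a finite-index subgroup `L` of
`F × ℤ` contains `(L ∩ F) × (L ∩ ℤ)`, where `L ∩ F` is free by Nielsen–Schreier and
nonabelian because it contains powers `xᵏ`, `yᵐ` of two distinct generators, which do not
commute.
-/

open Subgroup

namespace FreeGroup

theorem toWord_of_pow_mul_of_pow {α : Type*} [DecidableEq α] (x y : α) (k m : ℕ) :
    (of x ^ k * of y ^ m).toWord = List.replicate k (x, true) ++ List.replicate m (y, true) := by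
  rw [toWord_mul, toWord_of_pow, toWord_of_pow]
  refine IsReduced.reduce_eq (List.Pairwise.isChain (List.pairwise_of_forall_mem_list ?_))
  simp +contextual [List.mem_replicate]

theorem of_pow_mul_of_pow_ne {α : Type*} {x y : α} (hxy : x ≠ y) {k m : ℕ} (hk : k ≠ 0)
    (hm : m ≠ 0) : of x ^ k * of y ^ m ≠ of y ^ m * of x ^ k := by
  classical
  intro h
  have hhead := congrArg (List.head? ∘ toWord) h
  obtain ⟨k, rfl⟩ := Nat.exists_eq_succ_of_ne_zero hk
  obtain ⟨m, rfl⟩ := Nat.exists_eq_succ_of_ne_zero hm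
  simp only [Function.comp_apply, toWord_of_pow_mul_of_pow, List.replicate_succ] at hhead
  exact hxy (by simpa using hhead)

instance isCyclic_of_subsingleton {α : Type*} [Subsingleton α] : IsCyclic (FreeGroup α) := by
  cases isEmpty_or_nonempty α
  · infer_instance
  · have := uniqueOfSubsingleton (Classical.arbitrary α)
    infer_instance

theorem nontrivial_generators_of_index_ne_zero {ι : Type u} {x y : ι} (hxy : x ≠ y)
    {F : Subgroup (FreeGroup ι)} (hF : F.index ≠ 0) : Nontrivial (IsFreeGroup.Generators F) := by
  by_contra hsub
  rw [not_nontrivial_iff_subsingleton] at hsub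
  have : IsCyclic F :=
    isCyclic_of_surjective (IsFreeGroup.toFreeGroup F).symm.toMonoidHom
      (IsFreeGroup.toFreeGroup F).symm.surjective
  obtain ⟨k, hk, -, hxk⟩ := exists_pow_mem_of_index_ne_zero hF (of x)
  obtain ⟨m, hm, -, hym⟩ := exists_pow_mem_of_index_ne_zero hF (of y)
  exact of_pow_mul_of_pow_ne hxy hk.ne' hm.ne'
    (congrArg Subtype.val (IsCyclic.isMulCommutative.is_comm.comm (⟨_, hxk⟩ : F) ⟨_, hym⟩))

end FreeGroup

theorem Subgroup.nonempty_mulEquiv_int_of_index_ne_zero {Z : Subgroup (Multiplicative ℤ)}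
    (hZ : Z.index ≠ 0) : Nonempty (Z ≃* Multiplicative ℤ) := by
  have : Z.FiniteIndex := ⟨hZ⟩
  have : Infinite Z := by
    by_contra hfin
    rw [not_infinite_iff_finite] at hfin
    have := Finite.of_subgroup_quotient Z
    exact not_finite (Multiplicative ℤ)
  exact ⟨intCyclicMulEquiv.symm⟩

def IsFreeTimesInt (K : Type u) [Group K] : Prop :=
  ∃ (ι : Type u) (x y : ι), x ≠ y ∧ Nonempty (K ≃* FreeGroup ι × Multiplicative ℤ)

theorem IsFreeTimesInt.of_mulEquiv {K L : Type u} [Group K] [Group L] (e : K ≃* L)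
    (h : IsFreeTimesInt K) : IsFreeTimesInt L :=
  let ⟨ι, x, y, hxy, ⟨e'⟩⟩ := h
  ⟨ι, x, y, hxy, ⟨e.symm.trans e'⟩⟩

theorem isFreeTimesInt_prod {ι : Type u} {x y : ι} (hxy : x ≠ y)
    {F : Subgroup (FreeGroup ι)} (hF : F.index ≠ 0) {Z : Subgroup (Multiplicative ℤ)}
    (hZ : Z.index ≠ 0) : IsFreeTimesInt (F.prod Z) := by
  obtain ⟨s, t, hst⟩ := (FreeGroup.nontrivial_generators_of_index_ne_zero hxy hF).exists_pair_ne
  obtain ⟨eZ⟩ := nonempty_mulEquiv_int_of_index_ne_zero hZ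
  exact ⟨_, s, t, hst, ⟨(prodEquiv F Z).trans (.prodCongr (IsFreeGroup.toFreeGroup F) eZ)⟩⟩

theorem IsFreeTimesInt.exists_le_of_index_ne_zero {K : Type u} [Group K] (hK : IsFreeTimesInt K)
    {L : Subgroup K} (hL : L.index ≠ 0) : ∃ W ≤ L, W.index ≠ 0 ∧ IsFreeTimesInt W := by
  obtain ⟨ι, x, y, hxy, ⟨e⟩⟩ := hK
  let f : FreeGroup ι × Multiplicative ℤ →* K := e.symm
  have hL' : (L.comap f).index ≠ 0 := by
    rwa [index_comap_of_surjective L e.symm.surjective]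
  have hF : ((L.comap f).comap (.inl _ _)).index ≠ 0 := by
    rw [index_comap]; exact mt index_eq_zero_of_relIndex_eq_zero hL'
  have hZ : ((L.comap f).comap (.inr _ _)).index ≠ 0 := by
    rw [index_comap]; exact mt index_eq_zero_of_relIndex_eq_zero hL'
  have hW := (isFreeTimesInt_prod hxy hF hZ).of_mulEquiv (MulEquiv.subgroupMap e.symm _)
  refine ⟨_, ?_, ?_, hW⟩
  · rw [map_le_iff_le_comap]
    rintro ⟨a, b⟩ ⟨ha, hb⟩
    simpa [f] using mul_mem (show (a, 1) ∈ L.comap f from ha) (show (1, b) ∈ L.comap f from hb)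
  · rw [index_map_equiv, index_prod]
    exact mul_ne_zero hF hZ

theorem Subgroup.commensurable_inf_of_finiteIndex {G : Type*} [Group G] (X : Subgroup G)
    {G' : Subgroup G} [G'.FiniteIndex] : Commensurable (X ⊓ G') X :=
  ⟨by rw [inf_relIndex_left]; exact FiniteIndex.index_ne_zero,
    by rw [relIndex_eq_one.mpr inf_le_left]; exact one_ne_zero⟩

theorem Subgroup.Commensurable.relIndex_eq_zero_iff {G : Type*} [Group G] {H H' K K' : Subgroup G}
    (hH : Commensurable H H') (hK : Commensurable K K') :
    H.relIndex K = 0 ↔ H'.relIndex K' = 0 :=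
  not_iff_not.mp ⟨fun h ↦ relIndex_ne_zero_trans (relIndex_ne_zero_trans hH.2 h) hK.1,
    fun h ↦ relIndex_ne_zero_trans (relIndex_ne_zero_trans hH.1 h) hK.2⟩

theorem Subgroup.relIndex_subgroupOf_eq_zero_iff {G : Type*} [Group G] {G' : Subgroup G}
    [G'.FiniteIndex] (X Y : Subgroup G) :
    (X.subgroupOf G').relIndex (Y.subgroupOf G') = 0 ↔ X.relIndex Y = 0 := by
  rw [← relIndex_map_map_of_injective _ _ G'.subtype_injective, subgroupOf_map_subtype,
    subgroupOf_map_subtype]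
  exact (commensurable_inf_of_finiteIndex X).relIndex_eq_zero_iff
    (commensurable_inf_of_finiteIndex Y)

section VirtFNZ

variable {G : Type u} [Group G]

theorem isVirtFNZ_iff {B : Subgroup G} :
    IsVirtFNZ B ↔ ∃ H ≤ B, H.relIndex B ≠ 0 ∧ IsFreeTimesInt H :=
  Iff.rfl

theorem IsVirtFNZ.of_le_of_relIndex_ne_zero {B C : Subgroup G} (hCB : C ≤ B)
    (hC : C.relIndex B ≠ 0) (hB : IsVirtFNZ B) : IsVirtFNZ C := by
  obtain ⟨H, hHB, hHrel, hH⟩ := isVirtFNZ_iff.mp hB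
  have hL : (C.subgroupOf H).index ≠ 0 := mt (relIndex_eq_zero_of_le_right hHB) hC
  obtain ⟨W, hWL, hW, hWfree⟩ := hH.exists_le_of_index_ne_zero hL
  refine isVirtFNZ_iff.mpr ⟨W.map H.subtype, ?_, ?_,
    hWfree.of_mulEquiv (W.equivMapOfInjective _ H.subtype_injective)⟩
  · rintro _ ⟨w, hw, rfl⟩
    exact hWL hw
  · have hWH : (W.map H.subtype).relIndex H ≠ 0 := by
      rwa [relIndex, subgroupOf, comap_map_eq_self_of_injective H.subtype_injective]
    exact mt (relIndex_eq_zero_of_le_right hCB) (relIndex_ne_zero_trans hWH hHrel)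

theorem IsVirtFNZ.mono_of_relIndex_ne_zero {B C : Subgroup G} (hCB : C ≤ B)
    (hC : C.relIndex B ≠ 0) (h : IsVirtFNZ C) : IsVirtFNZ B :=
  let ⟨H, hHC, hrel, hH⟩ := h
  ⟨H, hHC.trans hCB, relIndex_ne_zero_trans hrel hC, hH⟩

theorem IsVirtFNZ.of_commensurable {B C : Subgroup G} (hBC : Commensurable B C)
    (hB : IsVirtFNZ B) : IsVirtFNZ C :=
  have hBC' : IsVirtFNZ (B ⊓ C) :=
    hB.of_le_of_relIndex_ne_zero inf_le_left (by rw [inf_relIndex_left]; exact hBC.2)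
  hBC'.mono_of_relIndex_ne_zero inf_le_right (by rw [inf_relIndex_right]; exact hBC.1)

theorem IsGroupBlock.of_commensurable {B C : Subgroup G} (hBC : Commensurable B C)
    (hB : IsGroupBlock B) : IsGroupBlock C :=
  ⟨hB.1.of_commensurable hBC, fun B' hB' h ↦
    relIndex_ne_zero_trans hBC.2 (hB.2 B' hB' (relIndex_ne_zero_trans h hBC.2))⟩

variable {K : Type u} [Group K] {f : K →* G}

theorem IsVirtFNZ.map (hf : Function.Injective f) {B : Subgroup K} (h : IsVirtFNZ B) :
    IsVirtFNZ (B.map f) :=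
  let ⟨H, hHB, hrel, hH⟩ := h
  ⟨H.map f, map_mono hHB, by rwa [relIndex_map_map_of_injective _ _ hf],
    IsFreeTimesInt.of_mulEquiv (H.equivMapOfInjective f hf) hH⟩

theorem IsVirtFNZ.of_map (hf : Function.Injective f) {B : Subgroup K} (h : IsVirtFNZ (B.map f)) :
    IsVirtFNZ B := by
  obtain ⟨H, hHB, hrel, hH⟩ := isVirtFNZ_iff.mp h
  have hHf : (H.comap f).map f = H := map_comap_eq_self (hHB.trans (map_le_range f B))
  refine isVirtFNZ_iff.mpr ⟨H.comap f, fun x hx ↦ ?_, by rwa [relIndex_comap], hH.of_mulEquiv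
    ((MulEquiv.subgroupCongr hHf).symm.trans ((H.comap f).equivMapOfInjective f hf).symm)⟩
  obtain ⟨y, hy, hyx⟩ := hHB hx
  rwa [← hf hyx]

end VirtFNZ

section Blocks

variable {G : Type u} [Group G] {G' : Subgroup G} [G'.FiniteIndex]

theorem isGroupBlock_map_subtype_iff {B : Subgroup G'} :
    IsGroupBlock (B.map G'.subtype) ↔ IsGroupBlock B := by
  have hinj := G'.subtype_injective
  constructor
  · rintro ⟨hvirt, hmax⟩
    refine ⟨hvirt.of_map hinj, fun B' hB' h ↦ ?_⟩
    rw [← relIndex_map_map_of_injective _ _ hinj] at h ⊢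
    exact hmax _ (hB'.map hinj) h
  · rintro ⟨hvirt, hmax⟩
    refine ⟨hvirt.map hinj, fun X hX h ↦ ?_⟩
    have hXG' : Commensurable (X ⊓ G') X := commensurable_inf_of_finiteIndex X
    have hY : (X.subgroupOf G').map G'.subtype = X ⊓ G' := subgroupOf_map_subtype X G'
    have hBY : B.relIndex (X.subgroupOf G') ≠ 0 := by
      refine hmax _ (.of_map hinj (hY ▸ hX.of_commensurable hXG'.symm)) ?_
      rw [← relIndex_map_map_of_injective _ _ hinj, hY]
      exact relIndex_ne_zero_trans hXG'.1 h
    rw [← relIndex_map_map_of_injective _ _ hinj, hY] at hBY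
    exact relIndex_ne_zero_trans hBY hXG'.1

theorem isGroupBlock_subgroupOf_iff {B : Subgroup G} :
    IsGroupBlock (B.subgroupOf G') ↔ IsGroupBlock B := by
  rw [← isGroupBlock_map_subtype_iff, subgroupOf_map_subtype]
  have hB : Commensurable (B ⊓ G') B := commensurable_inf_of_finiteIndex B
  exact ⟨.of_commensurable hB, .of_commensurable hB.symm⟩

end Blocks

namespace IsVirtuallyCyclic

variable {K L : Type*} [Group K] [Group L]

theorem of_injective {f : K →* L} (hf : Function.Injective f) (hr : f.range.index ≠ 0)
    (h : IsVirtuallyCyclic K) : IsVirtuallyCyclic L := by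
  obtain ⟨H, hHfin, hHcyc⟩ := h
  refine ⟨H.map f, ⟨?_⟩, isCyclic_of_surjective _ (H.equivMapOfInjective f hf).surjective⟩
  rw [H.index_map_of_injective hf]
  exact mul_ne_zero hHfin.index_ne_zero hr

theorem of_mulEquiv (e : K ≃* L) (h : IsVirtuallyCyclic K) : IsVirtuallyCyclic L :=
  h.of_injective (f := e.toMonoidHom) e.injective (by simp)

theorem of_subgroupOf {G : Type*} [Group G] {G' : Subgroup G} [G'.FiniteIndex] {T : Subgroup G}
    (h : IsVirtuallyCyclic (T.subgroupOf G')) : IsVirtuallyCyclic T := by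
  have hinf : IsVirtuallyCyclic ↥(T ⊓ G') := h.of_mulEquiv
    ((T.subgroupOf G').equivMapOfInjective _ G'.subtype_injective |>.trans
      (MulEquiv.subgroupCongr (subgroupOf_map_subtype T G')))
  refine hinf.of_injective (inclusion_injective inf_le_left) ?_
  rw [inclusion_range, ← relIndex, inf_relIndex_left]
  exact FiniteIndex.index_ne_zero

end IsVirtuallyCyclic

/-- For a finite-index subgroup `G' ≤ G`, `G'` has unbranched blocks
if and only if `G` does. -/
theorem finiteIndex_hasUnbranchedBlocks_iff {G : Type u} [Group G]
    (G' : Subgroup G) (hfin : G'.FiniteIndex) :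
    HasUnbranchedBlocks ↥G' ↔ HasUnbranchedBlocks G := by
  constructor
  · intro hub B₁ B₂ B₃ h₁ h₂ h₃ r₂₁ r₃₁ r₁₂ r₃₂ r₁₃ r₂₃
    simp only [← relIndex_subgroupOf_eq_zero_iff (G' := G')] at r₂₁ r₃₁ r₁₂ r₃₂ r₁₃ r₂₃
    exact IsVirtuallyCyclic.of_subgroupOf (G' := G') (hub _ _ _
      (isGroupBlock_subgroupOf_iff.mpr h₁) (isGroupBlock_subgroupOf_iff.mpr h₂)
      (isGroupBlock_subgroupOf_iff.mpr h₃) r₂₁ r₃₁ r₁₂ r₃₂ r₁₃ r₂₃)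
  · intro hub B₁ B₂ B₃ h₁ h₂ h₃ r₂₁ r₃₁ r₁₂ r₃₂ r₁₃ r₂₃
    have hinj := G'.subtype_injective
    simp only [← relIndex_map_map_of_injective _ _ hinj] at r₂₁ r₃₁ r₁₂ r₃₂ r₁₃ r₂₃
    have h := hub _ _ _ (isGroupBlock_map_subtype_iff.mpr h₁)
      (isGroupBlock_map_subtype_iff.mpr h₂) (isGroupBlock_map_subtype_iff.mpr h₃)
      r₂₁ r₃₁ r₁₂ r₃₂ r₁₃ r₂₃
    rw [← map_inf _ _ _ hinj, ← map_inf _ _ _ hinj] at h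
    exact h.of_mulEquiv ((B₁ ⊓ B₂ ⊓ B₃).equivMapOfInjective _ hinj).symm
end

section
/- Suppose a group G acts on a tree T with the following properties: (i) there are two colors of vertices, black and white, every edge joins a black vertex to a white vertex, and every black vertex has valence 2; (ii) the blocks of G are precisely the stabilizers of white vertices; (iii) for any white vertex ṽ and distinct black vertices b̃, b̃' adjacent to ṽ, the intersection Stab(b̃) ∩ Stab(b̃') is cyclic; (iv) distinct blocks stabilize distinct white vertices. Then for any three blocks B₁, B₂, B₃ of G with [Bᵢ : Bᵢ ∩ Bⱼ] = ∞ for i ≠ j, the intersection B₁ ∩ B₂ ∩ B₃ is virtually cyclic. -/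
universe u v

/-! Writing `Bᵢ = Stab(vᵢ)`, every element of `B₁ ∩ B₂ ∩ B₃` fixes the geodesics from
`v₁` to `v₂` and to `v₃` pointwise. Their union contains a white vertex with two distinct
neighbours on it: an interior white vertex of a geodesic of length at least three, or else,
when both geodesics have length two, `v₁` itself, since their midpoints cannot coincide (that
black vertex would have the three neighbours `v₁, v₂, v₃`). Those two black neighbours have a
cyclic common stabilizer, which therefore contains the triple intersection. -/

open SimpleGraph

namespace SimpleGraph

variable {V : Type*} {T : SimpleGraph V}

lemma IsAcyclic.apply_eq_self_of_mem_support (hT : T.IsAcyclic) {f : T →g T}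
    (hf : Function.Injective f) {u w : V} {p : T.Walk u w} (hp : p.IsPath)
    (hu : f u = u) (hw : f w = w) : ∀ x ∈ p.support, f x = x := by
  have hmap : (p.map f).copy hu hw = p :=
    congrArg Subtype.val <| (hT.subsingleton_path u w).elim
      ⟨_, (Walk.isPath_copy _ hu hw).2 (hp.map hf)⟩ ⟨p, hp⟩
  intro x hx
  obtain ⟨i, rfl, -⟩ := Walk.mem_support_iff_exists_getVert.1 hx
  conv_rhs => rw [← hmap]
  rw [Walk.getVert_copy, Walk.getVert_map]

lemma IsAcyclic.stabilizer_inf_le_stabilizer_of_mem_support {G : Type*} [Group G]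
    [MulAction G V] (hT : T.IsAcyclic)
    (hact : ∀ (g : G) (x y : V), T.Adj x y → T.Adj (g • x) (g • y))
    {u w : V} {p : T.Walk u w} (hp : p.IsPath) {x : V} (hx : x ∈ p.support) :
    MulAction.stabilizer G u ⊓ MulAction.stabilizer G w ≤ MulAction.stabilizer G x :=
  fun k hk => hT.apply_eq_self_of_mem_support (f := ⟨(k • ·), hact k _ _⟩)
    (MulAction.injective k) hp hk.1 hk.2 x hx

lemma not_three_adj_of_ncard_neighborSet_eq_two {b x y z : V}
    (hb : (T.neighborSet b).ncard = 2) (hx : T.Adj b x) (hy : T.Adj b y) (hz : T.Adj b z)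
    (hxy : x ≠ y) (hxz : x ≠ z) (hyz : y ≠ z) : False := by
  have hsub : ({x, y, z} : Set V) ⊆ T.neighborSet b := by
    rintro _ (rfl | rfl | rfl) <;> assumption
  have := Set.ncard_le_ncard hsub (Set.finite_of_ncard_ne_zero (by omega))
  rw [Set.ncard_eq_three.2 ⟨x, y, z, hxy, hxz, hyz, rfl⟩, hb] at this
  omega

end SimpleGraph

section Coloring

variable {V : Type*} {T : SimpleGraph V} {white : V → Prop}
  (hbip : ∀ x y : V, T.Adj x y → (white x ↔ ¬ white y))
include hbip

lemma exists_white_fork_of_three_le_length {u w : V} (hu : white u) {p : T.Walk u w}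
    (hp : p.IsPath) (hlen : 3 ≤ p.length) :
    ∃ m d d', white m ∧ d ≠ d' ∧ T.Adj m d ∧ T.Adj m d' ∧ d ∈ p.support ∧ d' ∈ p.support := by
  have hadj₀ : T.Adj u (p.getVert 1) := by simpa using p.adj_getVert_succ (i := 0) (by omega)
  have hadj₁ : T.Adj (p.getVert 1) (p.getVert 2) := p.adj_getVert_succ (by omega)
  refine ⟨p.getVert 2, p.getVert 1, p.getVert 3, ?_, ?_, hadj₁.symm,
    p.adj_getVert_succ (by omega), p.getVert_mem_support _, p.getVert_mem_support _⟩
  · exact not_not.1 <| mt (hbip _ _ hadj₁).2 ((hbip _ _ hadj₀).1 hu)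
  · intro h
    have := hp.getVert_injOn (show 1 ≤ p.length by omega) (show 3 ≤ p.length by omega) h
    omega

lemma adj_getVert_one_of_length_lt_three {u w : V} (hu : white u) (hw : white w) (huw : u ≠ w)
    (p : T.Walk u w) (hlen : p.length < 3) :
    T.Adj (p.getVert 1) u ∧ T.Adj (p.getVert 1) w := by
  have h0 : p.length ≠ 0 := fun h => huw (Walk.eq_of_length_eq_zero h)
  have h1 : p.length ≠ 1 := fun h => (hbip _ _ (Walk.adj_of_length_eq_one h)).1 hu hw
  have h2 : p.length = 2 := by omega
  refine ⟨(p.getVert_zero ▸ p.adj_getVert_succ (i := 0) (by omega)).symm, ?_⟩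
  simpa [← h2, p.getVert_length] using p.adj_getVert_succ (i := 1) (by omega)

lemma exists_white_fork_of_paths
    (hval : ∀ x : V, ¬ white x → (T.neighborSet x).ncard = 2)
    {v₁ v₂ v₃ : V} (hw₁ : white v₁) (hw₂ : white v₂) (hw₃ : white v₃)
    (h₁₂ : v₁ ≠ v₂) (h₁₃ : v₁ ≠ v₃) (h₂₃ : v₂ ≠ v₃)
    {p : T.Walk v₁ v₂} (hp : p.IsPath) {q : T.Walk v₁ v₃} (hq : q.IsPath) :
    ∃ m d d', white m ∧ d ≠ d' ∧ T.Adj m d ∧ T.Adj m d' ∧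
      (d ∈ p.support ∨ d ∈ q.support) ∧ (d' ∈ p.support ∨ d' ∈ q.support) := by
  by_cases hp3 : 3 ≤ p.length
  · obtain ⟨m, d, d', hm, hdd', hd, hd', hdp, hd'p⟩ :=
      exists_white_fork_of_three_le_length hbip hw₁ hp hp3
    exact ⟨m, d, d', hm, hdd', hd, hd', Or.inl hdp, Or.inl hd'p⟩
  by_cases hq3 : 3 ≤ q.length
  · obtain ⟨m, d, d', hm, hdd', hd, hd', hdq, hd'q⟩ :=
      exists_white_fork_of_three_le_length hbip hw₁ hq hq3
    exact ⟨m, d, d', hm, hdd', hd, hd', Or.inr hdq, Or.inr hd'q⟩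
  obtain ⟨hb₁, hb₂⟩ := adj_getVert_one_of_length_lt_three hbip hw₁ hw₂ h₁₂ p (by omega)
  obtain ⟨hb₁', hb₃⟩ := adj_getVert_one_of_length_lt_three hbip hw₁ hw₃ h₁₃ q (by omega)
  refine ⟨v₁, p.getVert 1, q.getVert 1, hw₁, fun h => ?_, hb₁.symm, hb₁'.symm,
    Or.inl (p.getVert_mem_support 1), Or.inr (q.getVert_mem_support 1)⟩
  rw [← h] at hb₃
  exact not_three_adj_of_ncard_neighborSet_eq_two (hval _ ((hbip _ _ hb₁.symm).1 hw₁))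
    hb₁ hb₂ hb₃ h₁₂ h₁₃ h₂₃

end Coloring

lemma IsCyclic.isVirtuallyCyclic {K : Type*} [Group K] [IsCyclic K] : IsVirtuallyCyclic K :=
  ⟨⊤, inferInstance, inferInstance⟩

theorem bipartite_tree_unbranched_general {G : Type u} {V : Type v} [Group G]
    (T : SimpleGraph V) (hT : T.IsTree) [MulAction G V]
    (white : V → Prop)
    (hact : ∀ (g : G) (x y : V), T.Adj x y → T.Adj (g • x) (g • y))
    (hbip : ∀ x y : V, T.Adj x y → (white x ↔ ¬ white y))
    (hval : ∀ x : V, ¬ white x → (T.neighborSet x).ncard = 2)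
    (hblocks : ∀ B : Subgroup G, IsGroupBlock B ↔
      ∃ x : V, white x ∧ B = MulAction.stabilizer G x)
    (hcyc : ∀ x y y' : V, white x → ¬ white y → ¬ white y' → y ≠ y' →
      T.Adj x y → T.Adj x y' →
      IsCyclic ↥(MulAction.stabilizer G y ⊓ MulAction.stabilizer G y')) :
    ∀ B₁ B₂ B₃ : Subgroup G, IsGroupBlock B₁ → IsGroupBlock B₂ → IsGroupBlock B₃ →
      B₂.relIndex B₁ = 0 → B₃.relIndex B₁ = 0 → B₁.relIndex B₂ = 0 →
      B₃.relIndex B₂ = 0 → B₁.relIndex B₃ = 0 → B₂.relIndex B₃ = 0 →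
      IsVirtuallyCyclic ↥(B₁ ⊓ B₂ ⊓ B₃) := by
  intro B₁ B₂ B₃ hB₁ hB₂ hB₃ h₂₁ h₃₁ _ h₃₂ _ _
  obtain ⟨v₁, hw₁, rfl⟩ := (hblocks B₁).1 hB₁
  obtain ⟨v₂, hw₂, rfl⟩ := (hblocks B₂).1 hB₂
  obtain ⟨v₃, hw₃, rfl⟩ := (hblocks B₃).1 hB₃
  have hne : ∀ {x y : V}, (MulAction.stabilizer G y).relIndex (MulAction.stabilizer G x) = 0 →
      x ≠ y := by
    rintro x y h rfl
    simp at h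
  obtain ⟨p, hp, -⟩ := hT.existsUnique_path v₁ v₂
  obtain ⟨q, hq, -⟩ := hT.existsUnique_path v₁ v₃
  obtain ⟨m, d, d', hm, hdd', hd, hd', hdpq, hd'pq⟩ := exists_white_fork_of_paths hbip hval
    hw₁ hw₂ hw₃ (hne h₂₁) (hne h₃₁) (hne h₃₂) hp hq
  have hfix : ∀ x, x ∈ p.support ∨ x ∈ q.support → MulAction.stabilizer G v₁ ⊓
      MulAction.stabilizer G v₂ ⊓ MulAction.stabilizer G v₃ ≤ MulAction.stabilizer G x := by
    rintro x (hx | hx)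
    · exact inf_le_left.trans (hT.isAcyclic.stabilizer_inf_le_stabilizer_of_mem_support hact hp hx)
    · exact (inf_le_inf_right _ inf_le_left).trans
        (hT.isAcyclic.stabilizer_inf_le_stabilizer_of_mem_support hact hq hx)
  have := hcyc m d d' hm ((hbip _ _ hd).1 hm) ((hbip _ _ hd').1 hm) hdd' hd hd'
  have := Subgroup.isCyclic_of_le (le_inf (hfix d hdpq) (hfix d' hd'pq))
  exact IsCyclic.isVirtuallyCyclic

/-- Suppose `G` acts on a bipartite tree `T` (black/white vertices)
where every black vertex has valence 2, blocks are exactly the stabilizers of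
white vertices, stabilizers of distinct black vertices adjacent to a common
white vertex intersect cyclically, and distinct blocks stabilize distinct white
vertices.  Then any three blocks with pairwise infinite-index intersections have
virtually cyclic triple intersection. -/
theorem bipartite_tree_unbranched {G : Type u} {V : Type v} [Group G]
    (T : SimpleGraph V) (hT : T.IsTree) [MulAction G V]
    (white : V → Prop)
    (hact : ∀ (g : G) (x y : V), T.Adj x y → T.Adj (g • x) (g • y))
    (hcol : ∀ (g : G) (x : V), white (g • x) ↔ white x)
    (hbip : ∀ x y : V, T.Adj x y → (white x ↔ ¬ white y))
    (hval : ∀ x : V, ¬ white x → (T.neighborSet x).ncard = 2)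
    (hblocks : ∀ B : Subgroup G, IsGroupBlock B ↔
      ∃ x : V, white x ∧ B = MulAction.stabilizer G x)
    (hcyc : ∀ x y y' : V, white x → ¬ white y → ¬ white y' → y ≠ y' →
      T.Adj x y → T.Adj x y' →
      IsCyclic ↥(MulAction.stabilizer G y ⊓ MulAction.stabilizer G y'))
    (hdistinct : ∀ x y : V, white x → white y →
      MulAction.stabilizer G x = MulAction.stabilizer G y → x = y) :
    ∀ B₁ B₂ B₃ : Subgroup G, IsGroupBlock B₁ → IsGroupBlock B₂ → IsGroupBlock B₃ →
      B₂.relIndex B₁ = 0 → B₃.relIndex B₁ = 0 → B₁.relIndex B₂ = 0 →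
      B₃.relIndex B₂ = 0 → B₁.relIndex B₃ = 0 → B₂.relIndex B₃ = 0 →
      IsVirtuallyCyclic ↥(B₁ ⊓ B₂ ⊓ B₃) :=
  bipartite_tree_unbranched_general T hT white hact hbip hval hblocks hcyc
end
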